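/- arXiv:0811.0557 — 2 statements merged into one kernel-verified Lean document; each statement's English description precedes it below -/
import Mathlib

section
/- Let m, n ∈ ℕ with m ≥ 2 and n ≥ 2. Define, for non-integer real a and c, F(a,c) := 4 λ(a) λ(c) sin(πa/2) sin(πc/2) { ζ(1−a) ζ(1−c) − ζ(1−a−c) B(a,c) / (1 − tan(πa/2) tan(πc/2)) }. Then the iterated limit lim_{a→m} lim_{c→n} F(a,c), with a and c approaching m and n through non-integer real values, exists and equals ζ(m) ζ(n) − (1/2) ζ(m+n). -/
open Real Filter Topology

/-- Riemann zeta as a real-valued function of a real argument. -/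
noncomputable def rzeta (s : ℝ) : ℝ := (riemannZeta (s : ℂ)).re

/-- `λ(z) = Γ(1-z)/(2π)^(1-z)`. -/
noncomputable def lam (z : ℝ) : ℝ := Real.Gamma (1 - z) / (2 * π) ^ (1 - z)

/-- Euler Beta function. -/
noncomputable def Beta (a c : ℝ) : ℝ := Real.Gamma a * Real.Gamma c / Real.Gamma (a + c)

/-- The reals which are not natural numbers. -/
def nonInt : Set ℝ := {x : ℝ | ∀ k : ℕ, x ≠ k}

/-- The function `F(a,c)` appearing in the limit `L₁(m,n)`. -/
noncomputable def F (a c : ℝ) : ℝ :=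
  4 * lam a * lam c * Real.sin (π * a / 2) * Real.sin (π * c / 2) *
    (rzeta (1 - a) * rzeta (1 - c) -
      rzeta (1 - a - c) * Beta a c /
        (1 - Real.tan (π * a / 2) * Real.tan (π * c / 2)))

/-!
The functional equation in the form `ζ(x) = 2 λ(x) sin(πx/2) ζ(1 - x)`, Euler's reflection
formula `Γ(x) Γ(1 - x) = π / sin(πx)` and `1 - tan x tan y = cos(x + y) / (cos x cos y)` turn
`F(a, c)` into `ζ(a) ζ(c) - ζ(a + c) / 2` as soon as `a`, `c` and `a + c` are not integers.
Near `c = n` this covers every non-integer `a`, and both limits follow from the continuity of `ζ`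
away from `1`. The remaining points of `nonInt` are the negative integers `a`, where Mathlib's
`Γ(a) = 0` makes the Beta term vanish, so that the inner limit is `ζ(a) ζ(n)` there.
-/

lemma rzeta_one_sub {x : ℝ} (hx : ∀ n : ℕ, x ≠ -n) (hx' : x ≠ 1) :
    rzeta (1 - x) = 2 * (2 * π) ^ (-x) * Gamma x * cos (π * x / 2) * rzeta x := by
  have h := riemannZeta_one_sub (s := x) (fun n hn => hx n (mod_cast hn)) (mod_cast hx')
  have hC : (2 : ℂ) * (2 * π) ^ (-(x : ℂ)) * Complex.Gamma x * Complex.cos (π * x / 2) =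
      ((2 * (2 * π) ^ (-x) * Gamma x * cos (π * x / 2) : ℝ) : ℂ) := by
    push_cast [Complex.ofReal_cpow two_pi_pos.le, Complex.Gamma_ofReal]
    rfl
  rw [rzeta, rzeta, Complex.ofReal_sub, Complex.ofReal_one, h, hC, Complex.re_ofReal_mul]

lemma rzeta_eq_lam_mul_sin_mul_rzeta_one_sub {x : ℝ} (hx : ∀ k : ℕ, x ≠ k) :
    rzeta x = 2 * lam x * sin (π * x / 2) * rzeta (1 - x) := by
  have h := rzeta_one_sub (x := 1 - x) (fun n h => hx (n + 1) (by push_cast; linarith))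
    (fun h => hx 0 (by push_cast; linarith))
  rw [sub_sub_cancel, show π * (1 - x) / 2 = π / 2 - π * x / 2 by ring, cos_pi_div_two_sub,
    rpow_neg two_pi_pos.le] at h
  rw [h, lam]
  have : (2 * π) ^ (1 - x) ≠ 0 := by positivity
  field_simp

lemma sin_pi_mul_ne_zero_of_ne_intCast {x : ℝ} (hx : ∀ k : ℤ, x ≠ k) : sin (π * x) ≠ 0 := by
  rw [sin_ne_zero_iff]
  intro k hk
  exact hx k (mul_left_cancel₀ pi_ne_zero (by linarith))

lemma sin_pi_mul_eq_two_mul_sin_mul_cos (x : ℝ) :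
    sin (π * x) = 2 * sin (π * x / 2) * cos (π * x / 2) := by
  rw [← sin_two_mul]; ring_nf

lemma cos_pi_mul_div_two_ne_zero {x : ℝ} (hx : ∀ k : ℤ, x ≠ k) : cos (π * x / 2) ≠ 0 := by
  have h := sin_pi_mul_ne_zero_of_ne_intCast hx
  rw [sin_pi_mul_eq_two_mul_sin_mul_cos] at h
  exact right_ne_zero_of_mul h

lemma lam_mul_sin {x : ℝ} (hx : ∀ k : ℤ, x ≠ k) :
    lam x * sin (π * x / 2) = π / (2 * (2 * π) ^ (1 - x) * Gamma x * cos (π * x / 2)) := by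
  have hΓ : Gamma x ≠ 0 := Gamma_ne_zero fun m h => hx (-m) (by simp [h])
  have hcos := cos_pi_mul_div_two_ne_zero hx
  have hsin := sin_pi_mul_ne_zero_of_ne_intCast hx
  have hΓ' : Gamma (1 - x) = π / (sin (π * x) * Gamma x) := by
    have h := Gamma_mul_Gamma_one_sub x
    field_simp at h ⊢
    linear_combination h
  rw [sin_pi_mul_eq_two_mul_sin_mul_cos] at hsin hΓ'
  have hsin' : sin (π * x / 2) ≠ 0 := fun h => hsin (by rw [h]; ring)
  have : (2 * π) ^ (1 - x) ≠ 0 := by positivity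
  rw [lam, hΓ']
  field_simp

lemma one_sub_tan_mul_tan {x y : ℝ} (hx : cos x ≠ 0) (hy : cos y ≠ 0) :
    1 - tan x * tan y = cos (x + y) / (cos x * cos y) := by
  rw [tan_eq_sin_div_cos, tan_eq_sin_div_cos, cos_add]
  field_simp

lemma four_lam_mul_sin_mul_beta_term {a c : ℝ} (ha : ∀ k : ℤ, a ≠ k) (hc : ∀ k : ℤ, c ≠ k)
    (hac : ∀ k : ℤ, a + c ≠ k) :
    4 * lam a * lam c * sin (π * a / 2) * sin (π * c / 2) *
      (rzeta (1 - a - c) * Beta a c / (1 - tan (π * a / 2) * tan (π * c / 2))) =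
      1 / 2 * rzeta (a + c) := by
  have hζ : rzeta (1 - a - c) =
      2 * (2 * π) ^ (-(a + c)) * Gamma (a + c) * cos (π * (a + c) / 2) * rzeta (a + c) := by
    rw [sub_sub, ← rzeta_one_sub (fun n h => hac (-n) (by simp [h])) (fun h => hac 1 (by simp [h]))]
  have hΓa : Gamma a ≠ 0 := Gamma_ne_zero fun m h => ha (-m) (by simp [h])
  have hΓc : Gamma c ≠ 0 := Gamma_ne_zero fun m h => hc (-m) (by simp [h])
  have hΓac : Gamma (a + c) ≠ 0 := Gamma_ne_zero fun m h => hac (-m) (by simp [h])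
  have hcosa := cos_pi_mul_div_two_ne_zero ha
  have hcosc := cos_pi_mul_div_two_ne_zero hc
  have hcosac := cos_pi_mul_div_two_ne_zero hac
  have hpa : (2 * π) ^ a ≠ 0 := by positivity
  have hpc : (2 * π) ^ c ≠ 0 := by positivity
  calc _ = 4 * (lam a * sin (π * a / 2)) * (lam c * sin (π * c / 2)) *
        (rzeta (1 - a - c) * Beta a c / (1 - tan (π * a / 2) * tan (π * c / 2))) := by ring
    _ = 1 / 2 * rzeta (a + c) := by
      rw [lam_mul_sin ha, lam_mul_sin hc, hζ, Beta, one_sub_tan_mul_tan hcosa hcosc,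
        ← add_div, ← mul_add, rpow_neg two_pi_pos.le, rpow_add two_pi_pos,
        rpow_sub two_pi_pos, rpow_sub two_pi_pos, rpow_one]
      field_simp
      ring

lemma F_eq_of_ne_intCast {a c : ℝ} (ha : ∀ k : ℤ, a ≠ k) (hc : ∀ k : ℤ, c ≠ k)
    (hac : ∀ k : ℤ, a + c ≠ k) :
    F a c = rzeta a * rzeta c - 1 / 2 * rzeta (a + c) := by
  rw [F, mul_sub, four_lam_mul_sin_mul_beta_term ha hc hac,
    rzeta_eq_lam_mul_sin_mul_rzeta_one_sub (fun k => ha k),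
    rzeta_eq_lam_mul_sin_mul_rzeta_one_sub (fun k => hc k)]
  ring

lemma F_eq_of_Gamma_eq_zero {a c : ℝ} (hΓ : Gamma a = 0) (ha : a ∈ nonInt) (hc : c ∈ nonInt) :
    F a c = rzeta a * rzeta c := by
  rw [F, Beta, hΓ, rzeta_eq_lam_mul_sin_mul_rzeta_one_sub ha,
    rzeta_eq_lam_mul_sin_mul_rzeta_one_sub hc]
  ring

lemma ne_intCast_of_mem_nonInt_of_Gamma_ne_zero {a : ℝ} (ha : a ∈ nonInt) (hΓ : Gamma a ≠ 0) :
    ∀ k : ℤ, a ≠ k := by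
  rintro k rfl
  obtain ⟨j, rfl | rfl⟩ := Int.eq_nat_or_neg k
  · exact ha j (by simp)
  · exact hΓ (by simpa using Gamma_neg_nat_eq_zero j)

lemma continuousAt_rzeta {t : ℝ} (ht : t ≠ 1) : ContinuousAt rzeta t :=
  Complex.continuous_re.continuousAt.comp
    ((differentiableAt_riemannZeta (mod_cast ht)).continuousAt.comp
      Complex.continuous_ofReal.continuousAt)

lemma eventually_nhdsNE_ne_intCast (y : ℝ) : ∀ᶠ x : ℝ in 𝓝[≠] y, ∀ k : ℤ, x ≠ k := by
  have h := isClosed_and_discrete_iff.mp ⟨Int.isClosedEmbedding_coe_real.isClosed_range,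
    Int.isClosedEmbedding_coe_real.isInducing.isDiscrete_range⟩ y
  filter_upwards [disjoint_principal_right.mp h] with x hx k hk
  exact hx ⟨k, hk.symm⟩

lemma eventually_nhds_ne_intCast {y : ℝ} (hy : ∀ k : ℤ, y ≠ k) :
    ∀ᶠ x : ℝ in 𝓝 y, ∀ k : ℤ, x ≠ k := by
  filter_upwards [Real.isOpen_compl_range_intCast.mem_nhds (fun ⟨k, hk⟩ => hy k hk.symm)]
    with x hx k hk
  exact hx ⟨k, hk.symm⟩

lemma nhdsWithin_nonInt_le_nhdsNE (n : ℕ) : 𝓝[nonInt] (n : ℝ) ≤ 𝓝[≠] (n : ℝ) :=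
  nhdsWithin_mono _ fun _ hx => hx n

noncomputable def innerLimit (n : ℕ) (a : ℝ) : ℝ :=
  if Gamma a = 0 then rzeta a * rzeta n else rzeta a * rzeta n - 1 / 2 * rzeta (a + n)

lemma tendsto_F_innerLimit {n : ℕ} (hn : n ≠ 1) {a : ℝ} (ha : a ∈ nonInt) :
    Tendsto (fun c => F a c) (𝓝[nonInt] (n : ℝ)) (𝓝 (innerLimit n a)) := by
  have hn1 : (n : ℝ) ≠ 1 := mod_cast hn
  by_cases hΓ : Gamma a = 0
  · rw [innerLimit, if_pos hΓ]
    refine (((continuousAt_const.mul (continuousAt_rzeta hn1)).tendsto).mono_left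
      nhdsWithin_le_nhds).congr' ?_
    filter_upwards [self_mem_nhdsWithin] with c hc
    exact (F_eq_of_Gamma_eq_zero hΓ ha hc).symm
  · rw [innerLimit, if_neg hΓ]
    have ha' := ne_intCast_of_mem_nonInt_of_Gamma_ne_zero ha hΓ
    have han : ∀ k : ℤ, a + n ≠ k := fun k h => ha' (k - n) (by push_cast; linarith)
    have hcont : ContinuousAt (fun c => rzeta a * rzeta c - 1 / 2 * rzeta (a + c)) n :=
      (continuousAt_const.mul (continuousAt_rzeta hn1)).sub (continuousAt_const.mul
        ((continuousAt_rzeta (mod_cast han 1)).comp' (continuous_const_add a).continuousAt))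
    refine (hcont.tendsto.mono_left nhdsWithin_le_nhds).congr' ?_
    filter_upwards [nhdsWithin_nonInt_le_nhdsNE n (eventually_nhdsNE_ne_intCast n),
      nhdsWithin_le_nhds ((continuous_const_add a).continuousAt.eventually
        (eventually_nhds_ne_intCast han))] with c hc hac
    exact (F_eq_of_ne_intCast ha' hc hac).symm

lemma tendsto_innerLimit (n : ℕ) {x : ℝ} (hx : 1 < x) :
    Tendsto (innerLimit n) (𝓝 x) (𝓝 (rzeta x * rzeta n - 1 / 2 * rzeta (x + n))) := by
  have hxn : x + n ≠ 1 := by linarith [n.cast_nonneg (α := ℝ)]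
  have hcont : ContinuousAt (fun a => rzeta a * rzeta n - 1 / 2 * rzeta (a + n)) x :=
    ((continuousAt_rzeta hx.ne').mul continuousAt_const).sub (continuousAt_const.mul
      ((continuousAt_rzeta hxn).comp' (f := (· + (n : ℝ))) (continuous_add_const _).continuousAt))
  refine hcont.tendsto.congr' ?_
  filter_upwards [lt_mem_nhds (zero_lt_one.trans hx)] with a ha
  rw [innerLimit, if_neg (Gamma_pos_of_pos ha).ne']

theorem L1_iterated_limit (m n : ℕ) (hm : 2 ≤ m) (hn : 2 ≤ n) :
    ∃ G : ℝ → ℝ,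
      (∀ a ∈ nonInt, Tendsto (fun c => F a c) (𝓝[nonInt] (n : ℝ)) (𝓝 (G a))) ∧
      Tendsto G (𝓝[nonInt] (m : ℝ))
        (𝓝 (rzeta m * rzeta n - (1 / 2) * rzeta (m + n))) :=
  ⟨innerLimit n, fun _ ha => tendsto_F_innerLimit (by omega) ha,
    (tendsto_innerLimit n (by exact_mod_cast hm)).mono_left nhdsWithin_le_nhds⟩
end

section
/- The Tornheim double series satisfies T(4,0,2) = Σ_{r=1}^∞ Σ_{s=1}^∞ 1/(r⁴ (r+s)²) = (25/12) ζ(6) − ζ(3)². -/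
open Real

open scoped ENNReal

/-- Tornheim double series with ENNReal values. -/
noncomputable def TT (a b c : ℕ) : ℝ≥0∞ :=
  ∑' r : ℕ+, ∑' s : ℕ+, ENNReal.ofReal
    (1 / (((r:ℕ):ℝ)^a * ((s:ℕ):ℝ)^b * (((r:ℕ):ℝ) + ((s:ℕ):ℝ))^c))

/-- Zeta values with ENNReal values. -/
noncomputable def ZZ (k : ℕ) : ℝ≥0∞ := ∑' n : ℕ+, ENNReal.ofReal (1 / ((n:ℕ):ℝ)^k)

lemma pnat_pos (r : ℕ+) : (0:ℝ) < ((r:ℕ):ℝ) := by exact_mod_cast r.pos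
lemma pnat_one_le (r : ℕ+) : (1:ℝ) ≤ ((r:ℕ):ℝ) := by exact_mod_cast r.one_le

lemma TT_sym (a b c : ℕ) : TT a b c = TT b a c := by
  unfold TT
  rw [ENNReal.tsum_comm]
  refine tsum_congr fun s => tsum_congr fun r => ?_
  rw [show (((r:ℕ):ℝ)^a * ((s:ℕ):ℝ)^b * (((r:ℕ):ℝ) + ((s:ℕ):ℝ))^c)
      = (((s:ℕ):ℝ)^b * ((r:ℕ):ℝ)^a * (((s:ℕ):ℝ) + ((r:ℕ):ℝ))^c) from by ring]

lemma TT_rec (a b c : ℕ) :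
    TT (a+1) (b+1) c = TT a (b+1) (c+1) + TT (a+1) b (c+1) := by
  unfold TT
  rw [← ENNReal.tsum_add]
  refine tsum_congr fun r => ?_
  rw [← ENNReal.tsum_add]
  refine tsum_congr fun s => ?_
  rw [← ENNReal.ofReal_add (by positivity) (by positivity)]
  congr 1
  have hr := pnat_pos r; have hs := pnat_pos s
  have hrs : (0:ℝ) < ((r:ℕ):ℝ) + ((s:ℕ):ℝ) := by linarith
  field_simp
  ring

lemma TT_mul (a b : ℕ) : TT a b 0 = ZZ a * ZZ b := by
  unfold TT ZZ
  rw [← ENNReal.tsum_mul_right]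
  refine tsum_congr fun r => ?_
  rw [← ENNReal.tsum_mul_left]
  refine tsum_congr fun s => ?_
  rw [← ENNReal.ofReal_mul (by positivity)]
  congr 1
  rw [pow_zero]
  ring

lemma TT_le_mul (a b c p q : ℕ)
    (h : ∀ x y : ℝ, 1 ≤ x → 1 ≤ y → x^p * y^q ≤ x^a * y^b * (x+y)^c) :
    TT a b c ≤ ZZ p * ZZ q := by
  rw [← TT_mul]
  unfold TT
  refine Summable.tsum_le_tsum (fun r => Summable.tsum_le_tsum (fun s => ?_) ENNReal.summable ENNReal.summable)
    ENNReal.summable ENNReal.summable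
  apply ENNReal.ofReal_le_ofReal
  rw [pow_zero, mul_one]
  have h1 := pnat_one_le r; have h2 := pnat_one_le s
  apply one_div_le_one_div_of_le (by positivity)
  exact h _ _ h1 h2

lemma TT_stuffle : TT 3 3 0 = 2 * TT 3 0 3 + ZZ 6 := by
  classical
  set g : ℕ+ × ℕ+ → ℝ≥0∞ := fun p =>
    ENNReal.ofReal (1 / (((p.1:ℕ):ℝ)^3 * ((p.2:ℕ):ℝ)^3)) with hg
  have hTT : TT 3 3 0 = ∑' p : ℕ+ × ℕ+, g p := by
    rw [TT, ENNReal.tsum_prod']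
    refine tsum_congr fun r => tsum_congr fun s => ?_
    simp [hg]
  have hT303 : TT 3 0 3 = ∑' p : ℕ+ × ℕ+, ENNReal.ofReal
      (1 / (((p.1:ℕ):ℝ)^3 * ((p.2:ℕ):ℝ)^0 * (((p.1:ℕ):ℝ) + ((p.2:ℕ):ℝ))^3)) := by
    rw [TT, ENNReal.tsum_prod']
  set g1 : ℕ+ × ℕ+ → ℝ≥0∞ := fun p => if p.1 < p.2 then g p else 0 with hg1
  set g2 : ℕ+ × ℕ+ → ℝ≥0∞ := fun p => if p.2 < p.1 then g p else 0 with hg2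
  set g3 : ℕ+ × ℕ+ → ℝ≥0∞ := fun p => if p.1 = p.2 then g p else 0 with hg3
  have hsplit : ∑' p : ℕ+ × ℕ+, g p = (∑' p, g1 p) + (∑' p, g2 p) + (∑' p, g3 p) := by
    rw [← ENNReal.tsum_add, ← ENNReal.tsum_add]
    refine tsum_congr fun p => ?_
    rcases lt_trichotomy p.1 p.2 with h | h | h
    · simp [hg1, hg2, hg3, h, h.ne, asymm h]
    · simp [hg1, hg2, hg3, h, lt_irrefl]
    · simp [hg1, hg2, hg3, h, h.ne', asymm h]
  have hpart1 : ∑' p, g1 p = TT 3 0 3 := by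
    have hinj : Function.Injective (fun q : ℕ+ × ℕ+ => (q.1, q.1 + q.2)) := by
      rintro ⟨a, b⟩ ⟨c, d⟩ h
      simp only [Prod.mk.injEq] at h
      obtain ⟨h1, h2⟩ := h
      subst h1
      exact Prod.ext rfl (by exact_mod_cast add_left_cancel h2)
    have hsupp : Function.support g1 ⊆ Set.range (fun q : ℕ+ × ℕ+ => (q.1, q.1 + q.2)) := by
      intro p hp
      have hlt : p.1 < p.2 := by
        by_contra h
        simp [hg1, h] at hp
      exact ⟨(p.1, p.2 - p.1), by simp [PNat.add_sub_of_lt hlt]⟩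
    rw [← hinj.tsum_eq hsupp, hT303]
    refine tsum_congr fun q => ?_
    have : q.1 < q.1 + q.2 := PNat.lt_add_right q.1 q.2
    simp only [hg1, hg, this, if_true]
    congr 1
    push_cast
    ring
  have hpart2 : ∑' p, g2 p = TT 3 0 3 := by
    have hinj : Function.Injective (fun q : ℕ+ × ℕ+ => (q.1 + q.2, q.1)) := by
      rintro ⟨a, b⟩ ⟨c, d⟩ h
      simp only [Prod.mk.injEq] at h
      obtain ⟨h2, h1⟩ := h
      subst h1
      exact Prod.ext rfl (by exact_mod_cast add_left_cancel h2)
    have hsupp : Function.support g2 ⊆ Set.range (fun q : ℕ+ × ℕ+ => (q.1 + q.2, q.1)) := by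
      intro p hp
      have hlt : p.2 < p.1 := by
        by_contra h
        simp [hg2, h] at hp
      exact ⟨(p.2, p.1 - p.2), by simp [PNat.add_sub_of_lt hlt]⟩
    rw [← hinj.tsum_eq hsupp, hT303]
    refine tsum_congr fun q => ?_
    have : q.1 < q.1 + q.2 := PNat.lt_add_right q.1 q.2
    simp only [hg2, hg, this, if_true]
    congr 1
    push_cast
    ring
  have hpart3 : ∑' p, g3 p = ZZ 6 := by
    have hinj : Function.Injective (fun n : ℕ+ => (n, n)) := by
      intro a b h
      simpa using congrArg Prod.fst h
    have hsupp : Function.support g3 ⊆ Set.range (fun n : ℕ+ => (n, n)) := by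
      intro p hp
      have heq : p.1 = p.2 := by
        by_contra h
        simp [hg3, h] at hp
      exact ⟨p.1, by simp [Prod.ext_iff, heq]⟩
    rw [← hinj.tsum_eq hsupp, ZZ]
    refine tsum_congr fun n => ?_
    simp only [hg3, hg, if_true]
    congr 1
    ring
  rw [hTT, hsplit, hpart1, hpart2, hpart3, two_mul]

lemma bern6 : bernoulli' 6 = 1/42 := by
  have c52 : Nat.choose 5 2 = 10 := by decide
  have c62 : Nat.choose 6 2 = 15 := by decide
  have c64 : Nat.choose 6 4 = 15 := by decide
  have h5 : bernoulli' 5 = 0 := by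
    rw [bernoulli'_def]
    norm_num [Finset.sum_range_succ, bernoulli'_two, bernoulli'_four, c52]
  rw [bernoulli'_def]
  norm_num [Finset.sum_range_succ, bernoulli'_two, bernoulli'_four, h5, c62, c64]

lemma bernoulli_six : bernoulli 6 = 1/42 := by
  rw [bernoulli_eq_bernoulli'_of_ne_one (by norm_num), bern6]

lemma hasSum_zeta_six : HasSum (fun n : ℕ => (1:ℝ) / (n:ℝ) ^ 6) (π ^ 6 / 945) := by
  have := hasSum_zeta_nat (k := 3) (by norm_num)
  norm_num [bernoulli_six, Nat.factorial] at this
  convert this using 1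
  · funext n; rw [one_div]
  · field_simp; ring

lemma summable_k (k : ℕ) (hk : 2 ≤ k) : Summable (fun n : ℕ => 1 / (n:ℝ)^k) :=
  summable_one_div_nat_pow.2 (by omega)

lemma ZZ_eq (k : ℕ) (hk : 2 ≤ k) : ZZ k = ENNReal.ofReal (∑' n : ℕ, 1 / (n:ℝ)^k) := by
  rw [ENNReal.ofReal_tsum_of_nonneg (fun n => by positivity) (summable_k k hk), ZZ]
  have hinj : Function.Injective (fun n : ℕ+ => (n : ℕ)) := PNat.coe_injective
  have hsupp : Function.support (fun m : ℕ => ENNReal.ofReal (1 / (m:ℝ)^k)) ⊆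
      Set.range (fun n : ℕ+ => (n : ℕ)) := by
    intro m hm
    rcases Nat.eq_zero_or_pos m with h | h
    · subst h
      simp [Function.mem_support, zero_pow (by omega : k ≠ 0)] at hm
    · exact ⟨⟨m, h⟩, rfl⟩
  exact hinj.tsum_eq hsupp

lemma rzeta_eq (k : ℕ) (hk : 2 ≤ k) : rzeta k = ∑' n : ℕ, 1 / (n:ℝ)^k := by
  have h1 : ((k:ℝ) : ℂ) = (k : ℂ) := by push_cast; rfl
  rw [rzeta, h1, zeta_nat_eq_tsum_of_gt_one (by omega : 1 < k)]
  have h2 : ∀ n : ℕ, (1 : ℂ) / (n:ℂ)^k = ((1 / (n:ℝ)^k : ℝ) : ℂ) := by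
    intro n; push_cast; ring
  rw [tsum_congr h2, ← Complex.ofReal_tsum, Complex.ofReal_re]

lemma ZZ_ne_top (k : ℕ) (hk : 2 ≤ k) : ZZ k ≠ ∞ := by
  rw [ZZ_eq k hk]; exact ENNReal.ofReal_ne_top

lemma ZZ_toReal (k : ℕ) (hk : 2 ≤ k) : (ZZ k).toReal = rzeta k := by
  rw [ZZ_eq k hk, rzeta_eq k hk, ENNReal.toReal_ofReal (tsum_nonneg fun n => by positivity)]

lemma E5 : 4 * (ZZ 2 * ZZ 4) = 7 * ZZ 6 := by
  rw [ZZ_eq 2 (by norm_num), ZZ_eq 4 (by norm_num), ZZ_eq 6 (by norm_num),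
    hasSum_zeta_two.tsum_eq, hasSum_zeta_four.tsum_eq, hasSum_zeta_six.tsum_eq,
    ← ENNReal.ofReal_mul (by positivity),
    show (4:ℝ≥0∞) = ENNReal.ofReal 4 from by simp,
    show (7:ℝ≥0∞) = ENNReal.ofReal 7 from by simp,
    ← ENNReal.ofReal_mul (by norm_num), ← ENNReal.ofReal_mul (by norm_num)]
  congr 1
  ring

theorem tornheim_T_4_0_2 :
    (∑' r : ℕ+, ∑' s : ℕ+, 1 / ((r : ℝ) ^ 4 * ((r : ℝ) + (s : ℝ)) ^ 2)) =
      (25 / 12) * rzeta 6 - (rzeta 3) ^ 2 := by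
  classical
  set u1 := TT 1 0 5 with hu1
  set u2 := TT 2 0 4 with hu2
  set u3 := TT 3 0 3 with hu3
  set t := TT 4 0 2 with ht
  -- bounds
  have hb1 : u1 ≤ ZZ 3 * ZZ 3 := by
    refine TT_le_mul 1 0 5 3 3 fun x y hx hy => ?_
    have hx0 : (0:ℝ) ≤ x := by linarith
    have hy0 : (0:ℝ) ≤ y := by linarith
    calc x^3 * y^3 = x * (x^2 * y^3) := by ring
      _ ≤ x * ((x+y)^2 * (x+y)^3) := by
          have : x^2 * y^3 ≤ (x+y)^2 * (x+y)^3 := by gcongr <;> linarith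
          exact mul_le_mul_of_nonneg_left this hx0
      _ = x^1 * y^0 * (x+y)^5 := by ring
  have hb2 : u2 ≤ ZZ 3 * ZZ 3 := by
    refine TT_le_mul 2 0 4 3 3 fun x y hx hy => ?_
    have hx0 : (0:ℝ) ≤ x := by linarith
    have hy0 : (0:ℝ) ≤ y := by linarith
    calc x^3 * y^3 = x^2 * (x * y^3) := by ring
      _ ≤ x^2 * ((x+y) * (x+y)^3) := by
          have : x * y^3 ≤ (x+y) * (x+y)^3 := by gcongr <;> linarith
          exact mul_le_mul_of_nonneg_left this (by positivity)
      _ = x^2 * y^0 * (x+y)^4 := by ring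
  have hb3 : u3 ≤ ZZ 3 * ZZ 3 := by
    refine TT_le_mul 3 0 3 3 3 fun x y hx hy => ?_
    have hx0 : (0:ℝ) ≤ x := by linarith
    have : y^3 ≤ (x+y)^3 := by gcongr <;> linarith
    calc x^3 * y^3 ≤ x^3 * (x+y)^3 := mul_le_mul_of_nonneg_left this (by positivity)
      _ = x^3 * y^0 * (x+y)^3 := by ring
  have hbt : t ≤ ZZ 2 * ZZ 2 := by
    refine TT_le_mul 4 0 2 2 2 fun x y hx hy => ?_
    have hx0 : (0:ℝ) ≤ x := by linarith
    have h1 : x^2 ≤ x^4 := pow_le_pow_right₀ hx (by norm_num)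
    have h2 : y^2 ≤ (x+y)^2 := by gcongr <;> linarith
    calc x^2 * y^2 ≤ x^4 * (x+y)^2 := mul_le_mul h1 h2 (by positivity) (by positivity)
      _ = x^4 * y^0 * (x+y)^2 := by ring
  have hZ3Z3 : ZZ 3 * ZZ 3 ≠ ∞ :=
    ENNReal.mul_ne_top (ZZ_ne_top 3 (by norm_num)) (ZZ_ne_top 3 (by norm_num))
  have hZ2Z2 : ZZ 2 * ZZ 2 ≠ ∞ :=
    ENNReal.mul_ne_top (ZZ_ne_top 2 (by norm_num)) (ZZ_ne_top 2 (by norm_num))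
  have hf1 : u1 ≠ ∞ := (lt_of_le_of_lt hb1 (lt_top_iff_ne_top.2 hZ3Z3)).ne
  have hf2 : u2 ≠ ∞ := (lt_of_le_of_lt hb2 (lt_top_iff_ne_top.2 hZ3Z3)).ne
  have hf3 : u3 ≠ ∞ := (lt_of_le_of_lt hb3 (lt_top_iff_ne_top.2 hZ3Z3)).ne
  have hft : t ≠ ∞ := (lt_of_le_of_lt hbt (lt_top_iff_ne_top.2 hZ2Z2)).ne
  -- the linear relations
  have e330 : ZZ 3 * ZZ 3 = 12*u1 + 6*u2 + 2*u3 := by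
    rw [← TT_mul, TT_rec 2 2 0, TT_sym 2 3 1, TT_rec 2 1 1, TT_rec 1 1 2, TT_sym 1 2 3,
      TT_rec 2 0 2, TT_rec 1 0 3, TT_rec 0 0 4, TT_sym 0 1 5, hu1, hu2, hu3]
    ring
  have e240 : ZZ 2 * ZZ 4 = t + 8*u1 + 4*u2 + 2*u3 := by
    rw [← TT_mul, TT_rec 1 3 0, TT_rec 0 3 1, TT_sym 0 4 2, TT_rec 1 2 1, TT_rec 0 2 2,
      TT_sym 0 3 3, TT_rec 1 1 2, TT_sym 1 2 3, TT_rec 1 0 3, TT_rec 0 0 4, TT_sym 0 1 5,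
      ← hu1, ← hu2, ← hu3, ← ht]
    ring
  have e4 : ZZ 3 * ZZ 3 = 2*u3 + ZZ 6 := by
    rw [← TT_mul, TT_stuffle, hu3]
  have e5 : 4 * (ZZ 2 * ZZ 4) = 7 * ZZ 6 := E5
  -- cancellation
  have key2 : 12*t + 12*(ZZ 3 * ZZ 3) + (96*u1 + 48*u2 + 24*u3) =
      25*ZZ 6 + (96*u1 + 48*u2 + 24*u3) := by
    calc 12*t + 12*(ZZ 3 * ZZ 3) + (96*u1 + 48*u2 + 24*u3)
        = 3*(4*(t + 8*u1 + 4*u2 + 2*u3)) + 12*(ZZ 3 * ZZ 3) := by ring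
      _ = 3*(4*(ZZ 2 * ZZ 4)) + 12*(ZZ 3 * ZZ 3) := by rw [← e240]
      _ = 3*(7*ZZ 6) + 8*(ZZ 3 * ZZ 3) + 4*(ZZ 3 * ZZ 3) := by rw [e5]; ring
      _ = 3*(7*ZZ 6) + 8*(12*u1 + 6*u2 + 2*u3) + 4*(2*u3 + ZZ 6) := by rw [← e330, ← e4]
      _ = 25*ZZ 6 + (96*u1 + 48*u2 + 24*u3) := by ring
  have hCfin : (96*u1 + 48*u2 + 24*u3) ≠ ∞ := by
    simp only [Ne, ENNReal.add_eq_top, ENNReal.mul_eq_top, not_or]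
    refine ⟨⟨?_, ?_⟩, ?_⟩ <;> simp [hf1, hf2, hf3]
  have key : 12*t + 12*(ZZ 3 * ZZ 3) = 25*ZZ 6 :=
    (ENNReal.add_left_inj hCfin).1 key2
  -- convert to reals
  have hTreal : t.toReal =
      ∑' r : ℕ+, ∑' s : ℕ+, 1 / ((r : ℝ) ^ 4 * ((r : ℝ) + (s : ℝ)) ^ 2) := by
    rw [ht, TT]
    have hinner : ∀ r : ℕ+, (∑' s : ℕ+, ENNReal.ofReal
        (1 / (((r:ℕ):ℝ)^4 * ((s:ℕ):ℝ)^0 * (((r:ℕ):ℝ) + ((s:ℕ):ℝ))^2))) ≠ ∞ := by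
      intro r
      have hle : (∑' s : ℕ+, ENNReal.ofReal
          (1 / (((r:ℕ):ℝ)^4 * ((s:ℕ):ℝ)^0 * (((r:ℕ):ℝ) + ((s:ℕ):ℝ))^2))) ≤ ZZ 2 := by
        rw [ZZ]
        refine Summable.tsum_le_tsum (fun s => ?_) ENNReal.summable ENNReal.summable
        apply ENNReal.ofReal_le_ofReal
        have h1 := pnat_one_le r; have h2 := pnat_one_le s
        apply one_div_le_one_div_of_le (by positivity)
        rw [pow_zero, mul_one]
        have e1 : ((s:ℕ):ℝ)^2 ≤ (((r:ℕ):ℝ) + ((s:ℕ):ℝ))^2 := by nlinarith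
        have e2 : (1:ℝ) ≤ ((r:ℕ):ℝ)^4 := one_le_pow₀ h1
        calc ((s:ℕ):ℝ)^2 ≤ (((r:ℕ):ℝ) + ((s:ℕ):ℝ))^2 := e1
          _ = 1 * (((r:ℕ):ℝ) + ((s:ℕ):ℝ))^2 := (one_mul _).symm
          _ ≤ ((r:ℕ):ℝ)^4 * (((r:ℕ):ℝ) + ((s:ℕ):ℝ))^2 :=
              mul_le_mul_of_nonneg_right e2 (by positivity)
      exact (lt_of_le_of_lt hle (lt_top_iff_ne_top.2 (ZZ_ne_top 2 (by norm_num)))).ne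
    rw [ENNReal.tsum_toReal_eq hinner]
    refine tsum_congr fun r => ?_
    rw [ENNReal.tsum_toReal_eq (fun s => ENNReal.ofReal_ne_top)]
    refine tsum_congr fun s => ?_
    rw [ENNReal.toReal_ofReal (by positivity)]
    norm_num
  have h3 := ZZ_toReal 3 (by norm_num)
  have h6 := ZZ_toReal 6 (by norm_num)
  have hkeyR := congrArg ENNReal.toReal key
  rw [ENNReal.toReal_add (ENNReal.mul_ne_top ENNReal.ofNat_ne_top hft)
      (ENNReal.mul_ne_top ENNReal.ofNat_ne_top hZ3Z3), ENNReal.toReal_mul,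
    ENNReal.toReal_mul, ENNReal.toReal_mul, ENNReal.toReal_mul] at hkeyR
  simp only [ENNReal.toReal_ofNat, h3, h6] at hkeyR
  have h36 : ((3:ℕ):ℝ) = (3:ℝ) := by norm_num
  have h66 : ((6:ℕ):ℝ) = (6:ℝ) := by norm_num
  rw [h36, h66] at hkeyR
  rw [← hTreal]
  nlinarith [hkeyR]
end
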